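/- Let α ∈ ℝ, let I ⊆ ℝ be an open interval, and let u : I → ℝ be twice differentiable and satisfy u''(x) = 2u(x)³ + x·u(x) − α on I. Suppose f(x) := 2u(x)² − 2u'(x) + x is nonzero on I. Then the Bäcklund transform v(x) := −u(x) + (2α+1)/f(x) is twice differentiable on I and satisfies v''(x) = 2v(x)³ + x·v(x) − (α+1) for all x ∈ I, i.e. v solves PII with parameter α + 1. -/

import Mathlib

open Filter Topology Set

/-- The auxiliary function `f(x) = 2 u(x)^2 - 2 u'(x) + x` appearing in the
Bäcklund transformation for Painlevé II. -/
def piiF (u u' : ℝ → ℝ) : ℝ → ℝ := fun x => 2 * (u x) ^ 2 - 2 * u' x + x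

/-- The Bäcklund transform `v(x) = -u(x) + (2α+1)/f(x)` of a solution `u`
of Painlevé II with parameter `α`. -/
noncomputable def backlund (α : ℝ) (u u' : ℝ → ℝ) : ℝ → ℝ :=
  fun x => -u x + (2 * α + 1) / piiF u u' x

/-!
Substituting the equation into `f' = 4uu' - 2u'' + 1` gives the first-order identity
`f' = (2α+1) - 2uf`. From it one checks that `v = -u + (2α+1)/f` satisfies the Riccati
equation `2v' = -2v² - x + f`; differentiating once more and using `(u + v) f = 2α+1`
eliminates `u` and `f` and leaves `v'' = 2v³ + xv - (α+1)`.
-/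

section Pointwise

variable {α x : ℝ} {u u' u'' : ℝ → ℝ}

theorem hasDerivAt_piiF (hu : HasDerivAt u (u' x) x) (hu' : HasDerivAt u' (u'' x) x)
    (hPII : u'' x = 2 * u x ^ 3 + x * u x - α) :
    HasDerivAt (piiF u u') (2 * α + 1 - 2 * u x * piiF u u' x) x := by
  have h := (((hu.pow 2).const_mul 2).sub (hu'.const_mul 2)).add (hasDerivAt_id x)
  refine h.congr_deriv ?_
  simp only [piiF, hPII]
  ring

theorem backlund_add_mul_piiF (hf : piiF u u' x ≠ 0) :
    (backlund α u u' x + u x) * piiF u u' x = 2 * α + 1 := by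
  simp only [backlund, neg_add_cancel_comm]
  exact div_mul_cancel₀ _ hf

theorem hasDerivAt_backlund (hu : HasDerivAt u (u' x) x)
    (hf' : HasDerivAt (piiF u u') (2 * α + 1 - 2 * u x * piiF u u' x) x)
    (hf : piiF u u' x ≠ 0) :
    HasDerivAt (backlund α u u')
      (-backlund α u u' x ^ 2 - x / 2 + piiF u u' x / 2) x := by
  have h := hu.neg.add ((hasDerivAt_const x (2 * α + 1)).div hf' hf)
  refine h.congr_deriv ?_
  simp only [backlund] at hf ⊢
  field_simp
  simp only [piiF]
  ring

end Pointwise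

theorem backlund_solves_PII_general (α : ℝ) (I : Set ℝ) (u u' u'' : ℝ → ℝ)
    (hu : ∀ x ∈ I, HasDerivAt u (u' x) x)
    (hu' : ∀ x ∈ I, HasDerivAt u' (u'' x) x)
    (hPII : ∀ x ∈ I, u'' x = 2 * (u x) ^ 3 + x * u x - α)
    (hf : ∀ x ∈ I, piiF u u' x ≠ 0) :
    ∃ v' v'' : ℝ → ℝ,
      (∀ x ∈ I, HasDerivAt (backlund α u u') (v' x) x) ∧
      (∀ x ∈ I, HasDerivAt v' (v'' x) x) ∧
      (∀ x ∈ I, v'' x = 2 * (backlund α u u' x) ^ 3 + x * backlund α u u' x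
        - (α + 1)) := by
  set v := backlund α u u'
  set f := piiF u u'
  have hf' : ∀ x ∈ I, HasDerivAt f (2 * α + 1 - 2 * u x * f x) x := fun x hx =>
    hasDerivAt_piiF (hu x hx) (hu' x hx) (hPII x hx)
  refine ⟨fun x => -v x ^ 2 - x / 2 + f x / 2,
    fun x => -2 * v x * (-v x ^ 2 - x / 2 + f x / 2) - 1 / 2 + (2 * α + 1 - 2 * u x * f x) / 2,
    fun x hx => hasDerivAt_backlund (hu x hx) (hf' x hx) (hf x hx), fun x hx => ?_,
    fun x hx => ?_⟩
  · have hv := hasDerivAt_backlund (hu x hx) (hf' x hx) (hf x hx)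
    refine (((hv.pow 2).neg.sub ((hasDerivAt_id x).div_const 2)).add
      ((hf' x hx).div_const 2)).congr_deriv ?_
    ring
  · linear_combination (-1 : ℝ) * backlund_add_mul_piiF (α := α) (hf x hx)

/-- if `u` solves Painlevé II with parameter `α` on an open
interval `I` and `f = 2 u^2 - 2 u' + x` does not vanish on `I`, then the
Bäcklund transform `v = -u + (2α+1)/f` is twice differentiable on `I` and
solves Painlevé II with parameter `α + 1` there. -/
theorem backlund_solves_PII (α : ℝ) (I : Set ℝ) (hIopen : IsOpen I)
    (hIconn : I.OrdConnected) (u u' u'' : ℝ → ℝ)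
    (hu : ∀ x ∈ I, HasDerivAt u (u' x) x)
    (hu' : ∀ x ∈ I, HasDerivAt u' (u'' x) x)
    (hPII : ∀ x ∈ I, u'' x = 2 * (u x) ^ 3 + x * u x - α)
    (hf : ∀ x ∈ I, piiF u u' x ≠ 0) :
    ∃ v' v'' : ℝ → ℝ,
      (∀ x ∈ I, HasDerivAt (backlund α u u') (v' x) x) ∧
      (∀ x ∈ I, HasDerivAt v' (v'' x) x) ∧
      (∀ x ∈ I, v'' x = 2 * (backlund α u u' x) ^ 3 + x * backlund α u u' x
        - (α + 1)) :=
  backlund_solves_PII_general α I u u' u'' hu hu' hPII hf
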